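/- For every Pandora's Box instance with a finite scenario set and every run of Weitzman's rule with full updates (Algorithm 3, with any choice of minimizers at each state), the algorithm's total cost satisfies ALG ≤ (3 + 2√2) · OPT, where OPT is the minimum total cost over all partially-adaptive solutions. -/

import Mathlib

open scoped Classical

/-- Opening cost paid on scenario `s` by the partially-adaptive solution that opens the
boxes in the order `π` and stops on scenario `s` after opening box `π (t s)`. -/
noncomputable def optOpenCost {B S : Type*} [Fintype B] (c : B → ℝ)
    (π : Fin (Fintype.card B) ≃ B) (t : S → Fin (Fintype.card B)) (s : S) : ℝ :=
  ∑ i ∈ Finset.Iic (t s), c (π i)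

/-- Value selected on scenario `s` by the partially-adaptive solution `(π, t)`:
the minimum value among the opened boxes `π 0, …, π (t s)`. -/
noncomputable def optValue {B S : Type*} [Fintype B] (v : B → S → ℝ)
    (π : Fin (Fintype.card B) ≃ B) (t : S → Fin (Fintype.card B)) (s : S) : ℝ :=
  (Finset.Iic (t s)).inf' Finset.nonempty_Iic (fun i => v (π i) s)

/-- In the tree of states built by Algorithm 3 (full updates), `fullPath v bx A s k` is
the set of scenarios still consistent with scenario `s` at depth `k`: the root state is
all scenarios, and the child containing `s` consists of the uncovered scenarios whose
value in the opened box `bx R` agrees with that of `s`. -/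
noncomputable def fullPath {B S : Type*} [Fintype S] [DecidableEq S]
    (v : B → S → ℝ) (bx : Finset S → B) (A : Finset S → Finset S) (s : S) : ℕ → Finset S
  | 0 => Finset.univ
  | k + 1 =>
      (fullPath v bx A s k \ A (fullPath v bx A s k)).filter
        (fun s' => v (bx (fullPath v bx A s k)) s' = v (bx (fullPath v bx A s k)) s)

/-- The vector of (residual) opening costs at the state of depth `k` on scenario `s`'s
root-to-leaf path: initially the original costs, and the cost of each opened box is set
to `0` in its children. -/
noncomputable def fullCostAt {B S : Type*} [Fintype S] [DecidableEq S] [DecidableEq B]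
    (c : B → ℝ) (v : B → S → ℝ) (bx : Finset S → B) (A : Finset S → Finset S)
    (s : S) : ℕ → B → ℝ
  | 0 => c
  | k + 1 => Function.update (fullCostAt c v bx A s k) (bx (fullPath v bx A s k)) 0

/-!
Charging the cost of every state to the scenarios it covers, the algorithm pays, summed over
scenarios `s`, the minimal ratio `σ` of the state `R` at which `s` is covered. Let `y` and `z` be
the `γ`- and `β`-quantiles on `R` of the optimal opening costs `copt` and values `vopt`. At least
a `(γ + β - 1)`-fraction `D` of `R` lies below both. The optimum opens on `D` a prefix of cost at
most `y`; split according to the box realizing each optimal value, every piece of `D` is a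
candidate set for that box, so `σ ≤ y / (γ + β - 1) + z`. The covering states form a laminar
family, and on each of them a `(1 - γ)`-fraction has optimal cost at least its `γ`-quantile;
hence every level set `{s | t ≤ y_s}` is at most `1 / (1 - γ)` times `{s | t ≤ copt s}`, and
the layer-cake formula gives `(1 - γ) ∑ y ≤ ∑ copt`, likewise `(1 - β) ∑ z ≤ ∑ vopt`. For
`γ = 2 - √2`, `β = 2√2 - 2` both resulting factors equal `1 / (3 - 2√2) = 3 + 2√2`.
-/

open Finset MeasureTheory

section Quantile

variable {S : Type*} (g : S → ℝ) (T : Finset S) (γ : ℝ)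

noncomputable def quantile : ℝ :=
  sInf {y | y ∈ g '' T ∧ γ * #T ≤ #{s ∈ T | g s ≤ y}}

theorem quantile_mem (hT : T.Nonempty) (hγ : γ ≤ 1) :
    quantile g T γ ∈ {y | y ∈ g '' T ∧ γ * #T ≤ #{s ∈ T | g s ≤ y}} := by
  refine Set.Nonempty.csInf_mem ?_ ((T.finite_toSet.image g).subset fun y hy => hy.1)
  obtain ⟨u, hu, hmax⟩ := exists_max_image T g hT
  refine ⟨g u, ⟨u, hu, rfl⟩, ?_⟩
  rw [filter_true_of_mem hmax]
  nlinarith [(#T).cast_nonneg (α := ℝ)]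

theorem quantile_nonneg (hg : ∀ s, 0 ≤ g s) : 0 ≤ quantile g T γ :=
  Real.sInf_nonneg fun _ ⟨⟨s, _, hs⟩, _⟩ => hs ▸ hg s

theorem card_filter_lt_quantile_lt (hT : T.Nonempty) (hγ : 0 < γ) :
    (#{s ∈ T | g s < quantile g T γ} : ℝ) < γ * #T := by
  by_contra! hcard
  have hpos : 0 < #{s ∈ T | g s < quantile g T γ} := by
    have : (0 : ℝ) < γ * #T := mul_pos hγ (by exact_mod_cast hT.card_pos)
    exact_mod_cast this.trans_le hcard
  obtain ⟨u, hu, hmax⟩ := exists_max_image _ g (card_pos.1 hpos)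
  have hle : quantile g T γ ≤ g u := by
    refine csInf_le ((T.finite_toSet.image g).subset fun y hy => hy.1).bddBelow
      ⟨⟨u, (mem_filter.1 hu).1, rfl⟩, hcard.trans ?_⟩
    exact_mod_cast card_le_card fun s hs =>
      mem_filter.2 ⟨(mem_filter.1 hs).1, hmax s hs⟩
  linarith [(mem_filter.1 hu).2]

theorem one_sub_mul_card_le_card_filter_quantile_le (hT : T.Nonempty) (hγ : 0 < γ) :
    (1 - γ) * #T ≤ #{s ∈ T | quantile g T γ ≤ g s} := by
  have hsplit := card_filter_add_card_filter_not (s := T) (fun s => quantile g T γ ≤ g s)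
  simp only [not_le] at hsplit
  have hlt := card_filter_lt_quantile_lt g T γ hT hγ
  have hcast :
      (#{s ∈ T | quantile g T γ ≤ g s} : ℝ) + #{s ∈ T | g s < quantile g T γ} = #T := by
    exact_mod_cast hsplit
  linarith

end Quantile

theorem mul_card_biUnion_le_of_laminar {α : Type*} [DecidableEq α] (F : Finset (Finset α))
    (hF : ∀ T ∈ F, ∀ T' ∈ F, ¬Disjoint T T' → T ⊆ T' ∨ T' ⊆ T) (p : α → Prop)
    (ε : ℝ)
    (heavy : ∀ T ∈ F, ε * #T ≤ #{x ∈ T | p x}) :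
    ε * #(F.biUnion id) ≤ #{x ∈ F.biUnion id | p x} := by
  set M := F.filter fun T => ∀ T' ∈ F, T ⊆ T' → T' ⊆ T
  have hcover : F.biUnion id = M.biUnion id := by
    refine subset_antisymm (fun x hx => ?_)
      (biUnion_subset_biUnion_of_subset_left _ (filter_subset _ _))
    obtain ⟨T, hT, hxT⟩ := mem_biUnion.1 hx
    obtain ⟨T₀, hT₀, hmax⟩ :=
      exists_max_image {T ∈ F | x ∈ T} card ⟨T, mem_filter.2 ⟨hT, hxT⟩⟩
    obtain ⟨hT₀F, hxT₀⟩ := mem_filter.1 hT₀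
    refine mem_biUnion.2 ⟨T₀, mem_filter.2 ⟨hT₀F, fun T' hT' hsub => ?_⟩, hxT₀⟩
    exact (eq_of_subset_of_card_le hsub (hmax T' (mem_filter.2 ⟨hT', hsub hxT₀⟩))).ge
  have hdisj : (M : Set (Finset α)).PairwiseDisjoint id := by
    intro T hT T' hT' hne
    obtain ⟨hTF, hTmax⟩ := mem_filter.1 hT
    obtain ⟨hT'F, hT'max⟩ := mem_filter.1 hT'
    by_contra hnd
    rcases hF T hTF T' hT'F hnd with h | h
    · exact hne (subset_antisymm h (hTmax T' hT'F h))
    · exact hne (subset_antisymm (hT'max T hTF h) h)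
  rw [hcover, filter_biUnion, card_biUnion hdisj, card_biUnion]
  · push_cast
    rw [mul_sum]
    exact sum_le_sum fun T hT => heavy T (mem_filter.1 hT).1
  · exact fun T hT T' hT' hne => disjoint_filter_filter (hdisj hT hT' hne)

theorem integrableOn_indicator_Iic_one (a M : ℝ) :
    IntegrableOn ((Set.Iic a).indicator (1 : ℝ → ℝ)) (Set.Ioc 0 M) :=
  (integrableOn_const (C := (1 : ℝ)) (by simp)).indicator measurableSet_Iic

theorem sum_eq_setIntegral_sum_indicator {ι : Type*} [Fintype ι] {h : ι → ℝ}
    (hh : ∀ i, 0 ≤ h i) {M : ℝ} (hM : ∀ i, h i ≤ M) :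
    ∑ i, h i = ∫ t in Set.Ioc 0 M, ∑ i, (Set.Iic (h i)).indicator 1 t := by
  rw [integral_finsetSum]
  · refine sum_congr rfl fun i _ => ?_
    rw [setIntegral_indicator measurableSet_Iic, Set.Ioc_inter_Iic, min_eq_right (hM i)]
    simp [hh i]
  · exact fun i _ => integrableOn_indicator_Iic_one (h i) M

theorem mul_sum_le_sum_of_mul_card_le {ι : Type*} [Fintype ι] {h g : ι → ℝ}
    (hh : ∀ i, 0 ≤ h i) (hg : ∀ i, 0 ≤ g i) {κ : ℝ}
    (hlevel : ∀ t > 0, κ * #{i | t ≤ h i} ≤ #{i | t ≤ g i}) :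
    κ * ∑ i, h i ≤ ∑ i, g i := by
  set M := ∑ i, h i + ∑ i, g i
  have hhM : ∀ i, h i ≤ M := fun i => by
    linarith [single_le_sum (fun j _ => hh j) (mem_univ i),
      sum_nonneg fun j (_ : j ∈ univ) => hg j]
  have hgM : ∀ i, g i ≤ M := fun i => by
    linarith [single_le_sum (fun j _ => hg j) (mem_univ i),
      sum_nonneg fun j (_ : j ∈ univ) => hh j]
  have hcount : ∀ (f : ι → ℝ) t,
      ∑ i, (Set.Iic (f i)).indicator 1 t = (#{i | t ≤ f i} : ℝ) := by
    intro f t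
    rw [← sum_boole]
    exact sum_congr rfl fun i _ => by simp [Set.indicator_apply]
  have hint : ∀ f : ι → ℝ,
      IntegrableOn (fun t => ∑ i, (Set.Iic (f i)).indicator 1 t) (Set.Ioc 0 M) :=
    fun f => integrable_finsetSum _ fun i _ => integrableOn_indicator_Iic_one (f i) M
  rw [sum_eq_setIntegral_sum_indicator hh hhM, sum_eq_setIntegral_sum_indicator hg hgM,
    ← integral_const_mul]
  refine setIntegral_mono_on ((hint h).const_mul κ) (hint g) measurableSet_Ioc fun t ht => ?_
  rw [hcount, hcount]
  exact hlevel t ht.1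

section PartiallyAdaptive

variable {B S : Type*} [Fintype B] (c : B → ℝ) (v : B → S → ℝ)
  (π : Fin (Fintype.card B) ≃ B) (τ : S → Fin (Fintype.card B))

theorem optOpenCost_nonneg (hc : ∀ b, 0 ≤ c b) (s : S) : 0 ≤ optOpenCost c π τ s :=
  sum_nonneg fun i _ => hc (π i)

theorem exists_optValue_eq (s : S) : ∃ i ≤ τ s, optValue v π τ s = v (π i) s := by
  obtain ⟨i, hi, heq⟩ := exists_mem_eq_inf' nonempty_Iic fun i => v (π i) s
  exact ⟨i, mem_Iic.1 hi, heq⟩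

theorem optValue_nonneg (hv : ∀ b s, 0 ≤ v b s) (s : S) : 0 ≤ optValue v π τ s := by
  obtain ⟨i, -, heq⟩ := exists_optValue_eq v π τ s
  exact heq ▸ hv _ _

end PartiallyAdaptive

noncomputable def ratio {B S : Type*} (c : B → ℝ) (v : B → S → ℝ) (R : Finset S) (b : B)
    (A : Finset S) : ℝ :=
  (c b * #R + ∑ x ∈ A, v b x) / #A

section MinimalRatio

variable {B S : Type*} [Fintype B] {c c' : B → ℝ} {v : B → S → ℝ}
  (π : Fin (Fintype.card B) ≃ B) (τ : S → Fin (Fintype.card B))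
  {σ : ℝ} {R : Finset S}

theorem mul_card_le_of_le_ratio (hc : ∀ b, 0 ≤ c b) (hc' : ∀ b, c' b ≤ c b)
    (hmin : ∀ b A', A' ⊆ R → A'.Nonempty → σ ≤ ratio c' v R b A')
    {D : Finset S} (hDR : D ⊆ R) {j : Fin (Fintype.card B)} (hj : ∀ s ∈ D, τ s ≤ j) :
    σ * #D ≤ (∑ i ∈ Iic j, c (π i)) * #R + ∑ s ∈ D, optValue v π τ s := by
  choose opener hopener hval using exists_optValue_eq v π τ
  have hmaps : ∀ s ∈ D, opener s ∈ Iic j := fun s hs =>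
    mem_Iic.2 ((hopener s).trans (hj s hs))
  have hfiber : ∀ i ∈ Iic j, σ * #{s ∈ D | opener s = i} ≤
      c (π i) * #R + ∑ s ∈ D with opener s = i, optValue v π τ s := by
    intro i _
    set Di := {s ∈ D | opener s = i}
    rcases Di.eq_empty_or_nonempty with hempty | hne
    · rw [hempty]
      simpa using mul_nonneg (hc (π i)) (#R).cast_nonneg
    have hle := (le_div_iff₀ (by exact_mod_cast hne.card_pos)).1
      (hmin (π i) Di ((filter_subset _ _).trans hDR) hne)
    have hvals : ∑ s ∈ Di, v (π i) s = ∑ s ∈ Di, optValue v π τ s :=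
      sum_congr rfl fun s hs => by rw [hval s, (mem_filter.1 hs).2]
    nlinarith [hc' (π i), (#R).cast_nonneg (α := ℝ)]
  calc σ * #D = ∑ i ∈ Iic j, σ * #{s ∈ D | opener s = i} := by
        rw [card_eq_sum_card_fiberwise hmaps]; push_cast; rw [mul_sum]
    _ ≤ ∑ i ∈ Iic j, (c (π i) * #R + ∑ s ∈ D with opener s = i, optValue v π τ s) :=
        sum_le_sum hfiber
    _ = (∑ i ∈ Iic j, c (π i)) * #R + ∑ s ∈ D, optValue v π τ s := by
        rw [sum_add_distrib, sum_mul, sum_fiberwise_of_maps_to hmaps]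

theorem le_ratio_quantile_add_quantile (hc : ∀ b, 0 ≤ c b) (hc' : ∀ b, c' b ≤ c b)
    (hmin : ∀ b A', A' ⊆ R → A'.Nonempty → σ ≤ ratio c' v R b A') (hR : R.Nonempty)
    {γ β : ℝ} (hγ : γ ≤ 1) (hβ : β ≤ 1) (hγβ : 1 < γ + β) :
    σ ≤ quantile (optOpenCost c π τ) R γ / (γ + β - 1) +
      quantile (optValue v π τ) R β := by
  set y := quantile (optOpenCost c π τ) R γ
  set z := quantile (optValue v π τ) R β
  set D := {s ∈ R | optOpenCost c π τ s ≤ y ∧ optValue v π τ s ≤ z}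
  have hDcard : (γ + β - 1) * #R ≤ #D := by
    set X := {s ∈ R | optOpenCost c π τ s ≤ y}
    set Y := {s ∈ R | optValue v π τ s ≤ z}
    have hXY : #X + #Y ≤ #R + #D := by
      rw [← card_union_add_card_inter, ← filter_and]
      exact Nat.add_le_add_right
        (card_le_card (union_subset (filter_subset _ R) (filter_subset _ R))) _
    have hX := (quantile_mem (optOpenCost c π τ) R γ hR hγ).2
    have hY := (quantile_mem (optValue v π τ) R β hR hβ).2
    have : (#X : ℝ) + #Y ≤ #R + #D := by exact_mod_cast hXY
    linarith
  have hδ : 0 < γ + β - 1 := by linarith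
  have hDpos : (0 : ℝ) < #D :=
    (mul_pos hδ (by exact_mod_cast hR.card_pos)).trans_le hDcard
  obtain ⟨s₀, hs₀, hmax⟩ := exists_max_image D τ (card_pos.1 (by exact_mod_cast hDpos))
  have hkey := mul_card_le_of_le_ratio π τ hc hc' hmin (D := D) (filter_subset _ R) hmax
  have hy₀ : optOpenCost c π τ s₀ * #R ≤ y * #R :=
    mul_le_mul_of_nonneg_right (mem_filter.1 hs₀).2.1 (#R).cast_nonneg
  have hz : ∑ s ∈ D, optValue v π τ s ≤ z * #D := by
    calc ∑ s ∈ D, optValue v π τ s ≤ ∑ s ∈ D, z :=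
          sum_le_sum fun s hs => (mem_filter.1 hs).2.2
      _ = z * #D := by rw [sum_const, nsmul_eq_mul, mul_comm]
  have hy : 0 ≤ y := quantile_nonneg _ _ _ (optOpenCost_nonneg c π τ hc)
  have hbound : σ * #D ≤ y * #R + z * #D := by
    unfold optOpenCost at hy₀
    linarith
  have hscaled : σ * (γ + β - 1) * #D ≤ (y + z * (γ + β - 1)) * #D := by
    nlinarith [mul_le_mul_of_nonneg_left hDcard hy, mul_le_mul_of_nonneg_right hbound hδ.le]
  rw [div_add' _ _ _ hδ.ne', le_div_iff₀ hδ]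
  exact le_of_mul_le_mul_right hscaled hDpos

end MinimalRatio

section Tree

variable {B S : Type*} [Fintype S] [DecidableEq S]
  (v : B → S → ℝ) (bx : Finset S → B) (A : Finset S → Finset S)

theorem fullPath_antitone (s : S) : Antitone (fullPath v bx A s) :=
  antitone_nat_of_succ_le fun _ _ hx => (mem_sdiff.1 (mem_filter.1 hx).1).1

theorem fullPath_eq_of_mem {s s' : S} {k : ℕ} (h : s' ∈ fullPath v bx A s k) {j : ℕ}
    (hj : j ≤ k) : fullPath v bx A s' j = fullPath v bx A s j := by
  induction j with
  | zero => rfl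
  | succ j ih =>
    have hval := (mem_filter.1 (fullPath_antitone v bx A s hj h)).2
    rw [fullPath, fullPath, ih (by omega), hval]

theorem fullCostAt_eq_of_mem [DecidableEq B] (c : B → ℝ) {s s' : S} {k : ℕ}
    (h : s' ∈ fullPath v bx A s k) {j : ℕ} (hj : j ≤ k) :
    fullCostAt c v bx A s' j = fullCostAt c v bx A s j := by
  induction j with
  | zero => rfl
  | succ j ih =>
    rw [fullCostAt, fullCostAt, ih (by omega), fullPath_eq_of_mem v bx A h (by omega)]

theorem fullCostAt_le [DecidableEq B] {c : B → ℝ} (hc : ∀ b, 0 ≤ c b) (s : S) (k : ℕ)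
    (b : B) :
    fullCostAt c v bx A s k b ≤ c b := by
  induction k with
  | zero => rfl
  | succ k ih =>
    rw [fullCostAt, Function.update_apply]
    split_ifs with hb
    · exact hb ▸ hc _
    · exact ih

variable (d : S → ℕ)

noncomputable def coverState (s : S) : Finset S :=
  fullPath v bx A s (d s)

theorem coverState_subset_or_subset {u u' x : S} (hx : x ∈ coverState v bx A d u)
    (hx' : x ∈ coverState v bx A d u') :
    coverState v bx A d u ⊆ coverState v bx A d u' ∨
      coverState v bx A d u' ⊆ coverState v bx A d u := by
  unfold coverState
  rw [← fullPath_eq_of_mem v bx A hx le_rfl, ← fullPath_eq_of_mem v bx A hx' le_rfl]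
  rcases le_total (d u) (d u') with h | h
  · exact Or.inr (fullPath_antitone v bx A x h)
  · exact Or.inl (fullPath_antitone v bx A x h)

variable {v bx A d}

theorem mem_fullPath_self (hnotcov : ∀ s, ∀ k < d s, s ∉ A (fullPath v bx A s k)) {s : S}
    {k : ℕ} (hk : k ≤ d s) : s ∈ fullPath v bx A s k := by
  induction k with
  | zero => exact mem_univ s
  | succ k ih => exact mem_filter.2 ⟨mem_sdiff.2 ⟨ih (by omega), hnotcov s k hk⟩, rfl⟩

theorem mem_coverState_self (hnotcov : ∀ s, ∀ k < d s, s ∉ A (fullPath v bx A s k)) (s : S) :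
    s ∈ coverState v bx A d s :=
  mem_fullPath_self hnotcov le_rfl

theorem le_depth_of_mem_fullPath_self (hcov : ∀ s, s ∈ A (fullPath v bx A s (d s))) {s : S}
    {k : ℕ} (h : s ∈ fullPath v bx A s k) : k ≤ d s := by
  by_contra! hlt
  exact (mem_sdiff.1 (mem_filter.1 (fullPath_antitone v bx A s hlt h)).1).2 (hcov s)

theorem depth_eq_and_coverState_eq (hnotcov : ∀ s, ∀ k < d s, s ∉ A (fullPath v bx A s k))
    (hcov : ∀ s, s ∈ A (fullPath v bx A s (d s)))
    (hAsub : ∀ s, ∀ k ≤ d s, A (fullPath v bx A s k) ⊆ fullPath v bx A s k)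
    {s s' : S} {k : ℕ} (hk : k ≤ d s) (h : s' ∈ A (fullPath v bx A s k)) :
    d s' = k ∧ coverState v bx A d s' = fullPath v bx A s k := by
  have hpath := fullPath_eq_of_mem v bx A (hAsub s k hk h) le_rfl
  have hdepth : d s' = k := le_antisymm
    (not_lt.1 fun hlt => hnotcov s' k hlt (hpath ▸ h))
    (le_depth_of_mem_fullPath_self hcov (hpath ▸ hAsub s k hk h))
  exact ⟨hdepth, by rw [coverState, hdepth, hpath]⟩

end Tree

theorem sum_sum_div_card_of_partition {ι : Type*} [Fintype ι] (C : ι → Finset ι)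
    (hself : ∀ i, i ∈ C i) (hC : ∀ i j, j ∈ C i → C j = C i) (f : ι → ℝ) :
    ∑ i, (∑ j ∈ C i, f j) / #(C i) = ∑ i, f i := by
  calc ∑ i, (∑ j ∈ C i, f j) / #(C i) = ∑ i, ∑ j ∈ C i, f j / #(C j) := by
        refine sum_congr rfl fun i _ => ?_
        rw [sum_div]
        exact sum_congr rfl fun j hj => by rw [hC i j hj]
    _ = ∑ j, ∑ i ∈ C j, f j / #(C j) := by
        refine sum_comm' fun i j => ?_
        simp only [mem_univ, true_and, and_true]
        exact ⟨fun h => hC i j h ▸ hself i, fun h => hC j i h ▸ hself j⟩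
    _ = ∑ j, f j := by
        refine sum_congr rfl fun j _ => ?_
        have : (0 : ℝ) < #(C j) := by exact_mod_cast card_pos.2 ⟨j, hself j⟩
        rw [sum_const, nsmul_eq_mul]
        field_simp

section Accounting

variable {B S : Type*} [Fintype S] [DecidableEq S]
  {v : B → S → ℝ} {bx : Finset S → B} {A : Finset S → Finset S} {d : S → ℕ}

theorem filter_mem_coverState_eq_biUnion
    (hnotcov : ∀ s, ∀ k < d s, s ∉ A (fullPath v bx A s k))
    (hcov : ∀ s, s ∈ A (fullPath v bx A s (d s)))
    (hAsub : ∀ s, ∀ k ≤ d s, A (fullPath v bx A s k) ⊆ fullPath v bx A s k)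
    (s : S) :
    ({s' | s ∈ coverState v bx A d s'} : Finset S) =
      (range (d s + 1)).biUnion fun k => A (fullPath v bx A s k) := by
  ext s'
  simp only [mem_filter, mem_univ, true_and, mem_biUnion, mem_range, Nat.lt_succ_iff]
  constructor
  · intro (h : s ∈ fullPath v bx A s' (d s'))
    have hpath := fullPath_eq_of_mem v bx A h le_rfl
    exact ⟨d s', le_depth_of_mem_fullPath_self hcov (hpath ▸ h), hpath ▸ hcov s'⟩
  · rintro ⟨k, hk, h⟩
    rw [(depth_eq_and_coverState_eq hnotcov hcov hAsub hk h).2]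
    exact mem_fullPath_self hnotcov hk

theorem sum_sum_range_eq_sum_mul_card_div
    (hnotcov : ∀ s, ∀ k < d s, s ∉ A (fullPath v bx A s k))
    (hcov : ∀ s, s ∈ A (fullPath v bx A s (d s)))
    (hAsub : ∀ s, ∀ k ≤ d s, A (fullPath v bx A s k) ⊆ fullPath v bx A s k)
    (hAne : ∀ s, ∀ k ≤ d s, (A (fullPath v bx A s k)).Nonempty) (F : S → ℕ → ℝ)
    (hF : ∀ {s s' k}, s' ∈ fullPath v bx A s k → F s' k = F s k) :
    ∑ s, ∑ k ∈ range (d s + 1), F s k =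
      ∑ s, F s (d s) * #(coverState v bx A d s) / #(A (coverState v bx A d s)) := by
  have hdisj : ∀ s : S, ((range (d s + 1) : Finset ℕ) : Set ℕ).PairwiseDisjoint
      fun k => A (fullPath v bx A s k) := by
    intro s k hk k' hk' hne
    refine disjoint_left.2 fun s' h h' => hne ?_
    have hdk := depth_eq_and_coverState_eq hnotcov hcov hAsub (mem_range_succ_iff.1 hk) h
    have hdk' := depth_eq_and_coverState_eq hnotcov hcov hAsub (mem_range_succ_iff.1 hk') h'
    exact hdk.1.symm.trans hdk'.1
  have hcharge : ∀ s, ∀ k ≤ d s, ∑ s' ∈ A (fullPath v bx A s k),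
      F s' (d s') / #(A (coverState v bx A d s')) = F s k := by
    intro s k hk
    calc ∑ s' ∈ A (fullPath v bx A s k), F s' (d s') / #(A (coverState v bx A d s'))
        = ∑ s' ∈ A (fullPath v bx A s k), F s k / #(A (fullPath v bx A s k)) := by
          refine sum_congr rfl fun s' h' => ?_
          obtain ⟨hdepth, hstate⟩ := depth_eq_and_coverState_eq hnotcov hcov hAsub hk h'
          rw [hdepth, hstate, hF (hAsub s k hk h')]
      _ = F s k := by
          have hpos : (0 : ℝ) < #(A (fullPath v bx A s k)) := by
            exact_mod_cast (hAne s k hk).card_pos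
          rw [sum_const, nsmul_eq_mul]
          field_simp
  symm
  calc ∑ s, F s (d s) * #(coverState v bx A d s) / #(A (coverState v bx A d s))
      = ∑ s', ∑ s ∈ coverState v bx A d s', F s' (d s') / #(A (coverState v bx A d s')) := by
        refine sum_congr rfl fun s' _ => ?_
        rw [sum_const, nsmul_eq_mul]
        ring
    _ = ∑ s, ∑ s' ∈ {s' | s ∈ coverState v bx A d s'},
          F s' (d s') / #(A (coverState v bx A d s')) :=
        sum_comm' fun s' s => by simp
    _ = ∑ s, ∑ k ∈ range (d s + 1), F s k := by
        refine sum_congr rfl fun s _ => ?_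
        rw [filter_mem_coverState_eq_biUnion hnotcov hcov hAsub, sum_biUnion (hdisj s)]
        exact sum_congr rfl fun k hk => hcharge s k (mem_range_succ_iff.1 hk)

theorem sum_cost_eq_sum_ratio [DecidableEq B] (c : B → ℝ)
    (hnotcov : ∀ s, ∀ k < d s, s ∉ A (fullPath v bx A s k))
    (hcov : ∀ s, s ∈ A (fullPath v bx A s (d s)))
    (hAsub : ∀ s, ∀ k ≤ d s, A (fullPath v bx A s k) ⊆ fullPath v bx A s k)
    (hAne : ∀ s, ∀ k ≤ d s, (A (fullPath v bx A s k)).Nonempty) :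
    ∑ s, ((∑ k ∈ range (d s + 1), fullCostAt c v bx A s k (bx (fullPath v bx A s k))) +
        v (bx (fullPath v bx A s (d s))) s) =
      ∑ s, ratio (fullCostAt c v bx A s (d s)) v (coverState v bx A d s)
        (bx (coverState v bx A d s)) (A (coverState v bx A d s)) := by
  have hblock : ∀ s s', s' ∈ A (coverState v bx A d s) →
      coverState v bx A d s' = coverState v bx A d s :=
    fun s s' h => (depth_eq_and_coverState_eq hnotcov hcov hAsub le_rfl h).2
  have hvalue : ∑ s, v (bx (fullPath v bx A s (d s))) s =
      ∑ s, (∑ x ∈ A (coverState v bx A d s), v (bx (coverState v bx A d s)) x) /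
        #(A (coverState v bx A d s)) := by
    refine (sum_sum_div_card_of_partition (fun s => A (coverState v bx A d s)) hcov
      (fun s s' h => congrArg A (hblock s s' h))
      fun s => v (bx (coverState v bx A d s)) s).symm.trans ?_
    refine sum_congr rfl fun s _ => congrArg (· / _) (sum_congr rfl fun s' h => ?_)
    rw [hblock s s' h]
  rw [sum_add_distrib, sum_sum_range_eq_sum_mul_card_div hnotcov hcov hAsub hAne
      (fun s k => fullCostAt c v bx A s k (bx (fullPath v bx A s k))) fun h => by
        rw [fullCostAt_eq_of_mem v bx A c h le_rfl, fullPath_eq_of_mem v bx A h le_rfl],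
    hvalue, ← sum_add_distrib]
  exact sum_congr rfl fun s _ => (add_div _ _ _).symm

end Accounting

section Quantiles

variable {B S : Type*} [Fintype S] [DecidableEq S]
  {v : B → S → ℝ} {bx : Finset S → B} {A : Finset S → Finset S} {d : S → ℕ}

theorem one_sub_mul_card_le_of_le_quantile_coverState
    (hnotcov : ∀ s, ∀ k < d s, s ∉ A (fullPath v bx A s k)) (g : S → ℝ) {γ : ℝ}
    (hγ₀ : 0 < γ) (hγ₁ : γ ≤ 1) (t : ℝ) :
    (1 - γ) * #{s | t ≤ quantile g (coverState v bx A d s) γ} ≤ #{s | t ≤ g s} := by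
  set W : Finset S := {s | t ≤ quantile g (coverState v bx A d s) γ}
  set F := W.image (coverState v bx A d)
  have hcover : W ⊆ F.biUnion id := fun s hs =>
    mem_biUnion.2 ⟨_, mem_image_of_mem _ hs, mem_coverState_self hnotcov s⟩
  have hlaminar : ∀ T ∈ F, ∀ T' ∈ F, ¬Disjoint T T' → T ⊆ T' ∨ T' ⊆ T := by
    intro T hT T' hT' hmeet
    obtain ⟨u, -, rfl⟩ := mem_image.1 hT
    obtain ⟨u', -, rfl⟩ := mem_image.1 hT'
    obtain ⟨x, hx, hx'⟩ := not_disjoint_iff.1 hmeet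
    exact coverState_subset_or_subset v bx A d hx hx'
  have hheavy : ∀ T ∈ F, (1 - γ) * #T ≤ #{x ∈ T | t ≤ g x} := by
    intro T hT
    obtain ⟨u, hu, rfl⟩ := mem_image.1 hT
    refine (one_sub_mul_card_le_card_filter_quantile_le g _ γ
      ⟨u, mem_coverState_self hnotcov u⟩ hγ₀).trans ?_
    exact_mod_cast card_le_card fun x hx =>
      mem_filter.2 ⟨(mem_filter.1 hx).1, (mem_filter.1 hu).2.trans (mem_filter.1 hx).2⟩
  calc (1 - γ) * #W ≤ (1 - γ) * #(F.biUnion id) :=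
        mul_le_mul_of_nonneg_left (by exact_mod_cast card_le_card hcover) (by linarith)
    _ ≤ #{x ∈ F.biUnion id | t ≤ g x} := mul_card_biUnion_le_of_laminar F hlaminar _ _ hheavy
    _ ≤ #{s | t ≤ g s} := by
        exact_mod_cast card_le_card (filter_subset_filter _ (subset_univ _))

theorem one_sub_mul_sum_quantile_coverState_le
    (hnotcov : ∀ s, ∀ k < d s, s ∉ A (fullPath v bx A s k)) {g : S → ℝ}
    (hg : ∀ s, 0 ≤ g s)
    {γ : ℝ} (hγ₀ : 0 < γ) (hγ₁ : γ ≤ 1) :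
    (1 - γ) * ∑ s, quantile g (coverState v bx A d s) γ ≤ ∑ s, g s :=
  mul_sum_le_sum_of_mul_card_le (fun _ => quantile_nonneg _ _ _ hg) hg fun t _ =>
    one_sub_mul_card_le_of_le_quantile_coverState hnotcov g hγ₀ hγ₁ t

end Quantiles

theorem sum_cost_le_of_quantile_levels {B S : Type*} [Fintype B] [Fintype S] [DecidableEq B]
    [DecidableEq S] (c : B → ℝ) (hc : ∀ b, 0 ≤ c b) (v : B → S → ℝ) (hv : ∀ b s, 0 ≤ v b s)
    (bx : Finset S → B) (A : Finset S → Finset S) (d : S → ℕ)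
    (hAsub : ∀ s, ∀ k ≤ d s, A (fullPath v bx A s k) ⊆ fullPath v bx A s k)
    (hAne : ∀ s, ∀ k ≤ d s, (A (fullPath v bx A s k)).Nonempty)
    (hmin : ∀ s, ∀ k ≤ d s, ∀ b' A', A' ⊆ fullPath v bx A s k → A'.Nonempty →
      ratio (fullCostAt c v bx A s k) v (fullPath v bx A s k) (bx (fullPath v bx A s k))
          (A (fullPath v bx A s k)) ≤
        ratio (fullCostAt c v bx A s k) v (fullPath v bx A s k) b' A')
    (hnotcov : ∀ s, ∀ k < d s, s ∉ A (fullPath v bx A s k))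
    (hcov : ∀ s, s ∈ A (fullPath v bx A s (d s)))
    (π : Fin (Fintype.card B) ≃ B) (τ : S → Fin (Fintype.card B))
    {γ β : ℝ} (hγ : γ < 1) (hβ : β < 1) (hγβ : 1 < γ + β) :
    ∑ s, ((∑ k ∈ range (d s + 1), fullCostAt c v bx A s k (bx (fullPath v bx A s k))) +
        v (bx (fullPath v bx A s (d s))) s) ≤
      (∑ s, optOpenCost c π τ s) / ((1 - γ) * (γ + β - 1)) +
        (∑ s, optValue v π τ s) / (1 - β) := by
  set Y := ∑ s, quantile (optOpenCost c π τ) (coverState v bx A d s) γ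
  set Z := ∑ s, quantile (optValue v π τ) (coverState v bx A d s) β
  have hstate : ∀ s, ratio (fullCostAt c v bx A s (d s)) v (coverState v bx A d s)
      (bx (coverState v bx A d s)) (A (coverState v bx A d s)) ≤
      quantile (optOpenCost c π τ) (coverState v bx A d s) γ / (γ + β - 1) +
        quantile (optValue v π τ) (coverState v bx A d s) β := fun s =>
    le_ratio_quantile_add_quantile π τ hc (fullCostAt_le v bx A hc s (d s))
      (hmin s (d s) le_rfl) ⟨s, mem_coverState_self hnotcov s⟩
      hγ.le hβ.le hγβ
  have hY : Y ≤ (∑ s, optOpenCost c π τ s) / (1 - γ) :=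
    (le_div_iff₀' (by linarith)).2 <| one_sub_mul_sum_quantile_coverState_le hnotcov
      (optOpenCost_nonneg c π τ hc) (by linarith) hγ.le
  have hZ : Z ≤ (∑ s, optValue v π τ s) / (1 - β) :=
    (le_div_iff₀' (by linarith)).2 <| one_sub_mul_sum_quantile_coverState_le hnotcov
      (optValue_nonneg v π τ hv) (by linarith) hβ.le
  rw [sum_cost_eq_sum_ratio c hnotcov hcov hAsub hAne]
  calc _ ≤ ∑ s, (quantile (optOpenCost c π τ) (coverState v bx A d s) γ / (γ + β - 1) +
          quantile (optValue v π τ) (coverState v bx A d s) β) := sum_le_sum fun s _ => hstate s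
    _ = Y / (γ + β - 1) + Z := by rw [sum_add_distrib, sum_div]
    _ ≤ _ := by
      rw [← div_div]
      exact add_le_add (div_le_div_of_nonneg_right hY (by linarith)) hZ

theorem weitzman_full_updates_approx_general
    {B S : Type*} [Fintype B] [Fintype S]
    [DecidableEq B] [DecidableEq S]
    (c : B → ℝ) (hc : ∀ b, 0 ≤ c b)
    (v : B → S → ℝ) (hv : ∀ b s, 0 ≤ v b s)
    -- a run of Algorithm 3: the chosen box `bx R` and covered set `A R` at each state,
    -- and the depth `d s` at which each scenario `s` is covered
    (bx : Finset S → B) (A : Finset S → Finset S) (d : S → ℕ)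
    (hAsub : ∀ s : S, ∀ k ≤ d s, A (fullPath v bx A s k) ⊆ fullPath v bx A s k)
    (hAne : ∀ s : S, ∀ k ≤ d s, (A (fullPath v bx A s k)).Nonempty)
    -- `(bx R, A R)` minimizes the ratio over all boxes and nonempty subsets of `R`:
    (hmin : ∀ s : S, ∀ k ≤ d s, ∀ b' : B, ∀ A' : Finset S,
      A' ⊆ fullPath v bx A s k → A'.Nonempty →
      (fullCostAt c v bx A s k (bx (fullPath v bx A s k)) * (fullPath v bx A s k).card +
          ∑ x ∈ A (fullPath v bx A s k), v (bx (fullPath v bx A s k)) x) /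
        (A (fullPath v bx A s k)).card ≤
      (fullCostAt c v bx A s k b' * (fullPath v bx A s k).card + ∑ x ∈ A', v b' x) /
        A'.card)
    -- scenario `s` survives until depth `d s`, where it is covered:
    (hnotcov : ∀ s : S, ∀ k < d s, s ∉ A (fullPath v bx A s k))
    (hcov : ∀ s : S, s ∈ A (fullPath v bx A s (d s)))
    -- any partially-adaptive solution:
    (π : Fin (Fintype.card B) ≃ B) (τ : S → Fin (Fintype.card B)) :
    ∑ s, ((∑ k ∈ Finset.range (d s + 1),
          fullCostAt c v bx A s k (bx (fullPath v bx A s k))) +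
        v (bx (fullPath v bx A s (d s))) s) ≤
      (3 + 2 * Real.sqrt 2) * ∑ s, (optOpenCost c π τ s + optValue v π τ s) := by
  have hsq : Real.sqrt 2 ^ 2 = 2 := Real.sq_sqrt zero_le_two
  have hlo : 1 < Real.sqrt 2 := by nlinarith [Real.sqrt_nonneg 2]
  have hhi : Real.sqrt 2 < 3 / 2 := by nlinarith [Real.sqrt_nonneg 2]
  refine (sum_cost_le_of_quantile_levels c hc v hv bx A d hAsub hAne hmin hnotcov hcov π τ
    (γ := 2 - Real.sqrt 2) (β := 2 * Real.sqrt 2 - 2) (by linarith) (by linarith)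
    (by linarith)).trans_eq ?_
  have hlevels : (1 - (2 - Real.sqrt 2)) * (2 - Real.sqrt 2 + (2 * Real.sqrt 2 - 2) - 1) =
      1 - (2 * Real.sqrt 2 - 2) := by linear_combination hsq
  rw [hlevels, ← add_div, ← sum_add_distrib, div_eq_iff (by linarith)]
  linear_combination 4 * (∑ s, (optOpenCost c π τ s + optValue v π τ s)) * hsq

/-- Weitzman's rule with full updates (Algorithm 3) is a `(3 + 2√2)`-approximation
against the partially-adaptive optimal: for every run of the algorithm (any choice of
minimizing box `bx R` and scenario set `A R` at each reachable state) and every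
partially-adaptive solution `(π, τ)`, the total cost of the algorithm — each scenario
pays the opening cost of the chosen box at every state on its root-to-covering path,
plus the value with which it is covered — is at most `(3 + 2√2)` times the total cost
of `(π, τ)`. -/
theorem weitzman_full_updates_approx
    {B S : Type*} [Fintype B] [Fintype S] [Nonempty B] [Nonempty S]
    [DecidableEq B] [DecidableEq S]
    (c : B → ℝ) (hc : ∀ b, 0 ≤ c b)
    (v : B → S → ℝ) (hv : ∀ b s, 0 ≤ v b s)
    -- a run of Algorithm 3: the chosen box `bx R` and covered set `A R` at each state,
    -- and the depth `d s` at which each scenario `s` is covered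
    (bx : Finset S → B) (A : Finset S → Finset S) (d : S → ℕ)
    (hAsub : ∀ s : S, ∀ k ≤ d s, A (fullPath v bx A s k) ⊆ fullPath v bx A s k)
    (hAne : ∀ s : S, ∀ k ≤ d s, (A (fullPath v bx A s k)).Nonempty)
    -- `(bx R, A R)` minimizes the ratio over all boxes and nonempty subsets of `R`:
    (hmin : ∀ s : S, ∀ k ≤ d s, ∀ b' : B, ∀ A' : Finset S,
      A' ⊆ fullPath v bx A s k → A'.Nonempty →
      (fullCostAt c v bx A s k (bx (fullPath v bx A s k)) * (fullPath v bx A s k).card +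
          ∑ x ∈ A (fullPath v bx A s k), v (bx (fullPath v bx A s k)) x) /
        (A (fullPath v bx A s k)).card ≤
      (fullCostAt c v bx A s k b' * (fullPath v bx A s k).card + ∑ x ∈ A', v b' x) /
        A'.card)
    -- scenario `s` survives until depth `d s`, where it is covered:
    (hnotcov : ∀ s : S, ∀ k < d s, s ∉ A (fullPath v bx A s k))
    (hcov : ∀ s : S, s ∈ A (fullPath v bx A s (d s)))
    -- any partially-adaptive solution:
    (π : Fin (Fintype.card B) ≃ B) (τ : S → Fin (Fintype.card B)) :
    ∑ s, ((∑ k ∈ Finset.range (d s + 1),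
          fullCostAt c v bx A s k (bx (fullPath v bx A s k))) +
        v (bx (fullPath v bx A s (d s))) s) ≤
      (3 + 2 * Real.sqrt 2) * ∑ s, (optOpenCost c π τ s + optValue v π τ s) :=
  weitzman_full_updates_approx_general c hc v hv bx A d hAsub hAne hmin hnotcov hcov π τ
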